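/- arXiv:2504.21163 — 2 statements merged into one kernel-verified Lean document; each statement's English description precedes it below -/
import Mathlib

section
/- Let Γ be a finite abelian group acting on a Lie algebra g and on a commutative k-algebra A by automorphisms, where k is algebraically closed of characteristic 0. With Γ acting diagonally on g ⊗ A, the fixed-point Lie subalgebra (g ⊗ A)^Γ decomposes as the direct sum over characters χ ∈ Γ̂ of the subspaces g_χ ⊗ A_{χ⁻¹}, where g_χ and A_{χ⁻¹} are the corresponding isotypic components. -/
/-!
Averaging a representation of `Γ` against a character `χ` gives a projection `P_χ` onto the
`χ`-isotypic part. The first orthogonality relation makes `P_χ` the identity on `V_χ` and zero on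
`V_ψ` for `ψ ≠ χ`; applied to the first tensor factor this separates the spans of
`g_χ ⊗ A_{χ⁻¹}`, which are therefore independent. Once `k` has enough roots of unity the
characters separate the points of `Γ` and `|Γ̂| = |Γ|`, so the second orthogonality relation gives
`∑_χ P_χ = 1`. Averaging over `Γ` after applying `P_χ ⊗ 1` yields `P_χ ⊗ P_{χ⁻¹}`, so the
averaging projection onto the invariants is `∑_χ P_χ ⊗ P_{χ⁻¹}`, whose range lies in the sum of
the spans of `g_χ ⊗ A_{χ⁻¹}`.
-/

open TensorProduct

theorem iSupIndep_of_le_eqLocus_of_le_ker {ι R M : Type*} [Semiring R] [AddCommMonoid M]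
    [Module R M] {S : ι → Submodule R M} (P : ι → M →ₗ[R] M)
    (hid : ∀ i, S i ≤ LinearMap.eqLocus (P i) .id)
    (hker : ∀ i j, i ≠ j → S j ≤ LinearMap.ker (P i)) : iSupIndep S := by
  intro i
  rw [Submodule.disjoint_def]
  intro v hv hv'
  have hPv : P i v = 0 := iSup₂_le (fun j hj ↦ hker i j (Ne.symm hj)) hv'
  exact (hid i hv).symm.trans hPv

theorem card_monoidHom_units_eq_card {M G : Type*} [CommMonoid M] [CommGroup G] [Fintype G]
    [HasEnoughRootsOfUnity M (Monoid.exponent G)] [Fintype (G →* Mˣ)] :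
    Fintype.card (G →* Mˣ) = Fintype.card G := by
  simpa only [Nat.card_eq_fintype_card] using
    CommGroup.card_monoidHom_of_hasEnoughRootsOfUnity G M

section Orthogonality

variable {k G : Type*} [CommRing k] [IsDomain k] [CommGroup G] [Fintype G]

theorem MonoidHom.sum_coe_apply_eq_zero {φ : G →* kˣ} (hφ : φ ≠ 1) : ∑ g, (φ g : k) = 0 :=
  sum_hom_units_eq_zero ((Units.coeHom k).comp φ) fun h ↦
    hφ <| MonoidHom.ext fun g ↦ Units.ext <| DFunLike.congr_fun h g

variable [HasEnoughRootsOfUnity k (Monoid.exponent G)] [Fintype (G →* kˣ)]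

theorem sum_monoidHom_units_apply_eq_zero {g : G} (hg : g ≠ 1) :
    ∑ χ : G →* kˣ, (χ g : k) = 0 := by
  have heval : (MonoidHom.eval g : (G →* kˣ) →* kˣ) ≠ 1 := fun h ↦ hg <|
    (CommGroup.forall_apply_eq_apply_iff G (M := k)).mp fun χ ↦ by
      simpa using DFunLike.congr_fun h χ
  exact MonoidHom.sum_coe_apply_eq_zero heval

end Orthogonality

namespace Representation

variable {k G V W : Type*} [Field k] [CommGroup G]
  [AddCommGroup V] [Module k V] [AddCommGroup W] [Module k W]
  (ρ : Representation k G V) (σ : Representation k G W)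

def charSubspace (χ : G →* kˣ) : Submodule k V where
  carrier := {v | ∀ g, ρ g v = (χ g : k) • v}
  add_mem' hv hw g := by simp only [map_add, hv g, hw g, smul_add]
  zero_mem' g := by simp only [map_zero, smul_zero]
  smul_mem' c v hv g := by simp only [map_smul, hv g, smul_comm c]

theorem mem_charSubspace {χ : G →* kˣ} {v : V} :
    v ∈ ρ.charSubspace χ ↔ ∀ g, ρ g v = (χ g : k) • v :=
  Iff.rfl

def tensorCharSpan (χ : G →* kˣ) : Submodule k (V ⊗[k] W) :=
  Submodule.span k {z | ∃ (x : V) (a : W),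
    x ∈ ρ.charSubspace χ ∧ a ∈ σ.charSubspace χ⁻¹ ∧ z = x ⊗ₜ[k] a}

theorem tmul_mem_invariants_tprod {χ : G →* kˣ} {x : V} {a : W} (hx : x ∈ ρ.charSubspace χ)
    (ha : a ∈ σ.charSubspace χ⁻¹) : x ⊗ₜ[k] a ∈ (ρ.tprod σ).invariants := by
  intro g
  rw [tprod_apply, map_tmul, hx g, ha g, smul_tmul_smul, MonoidHom.inv_apply, ← Units.val_mul,
    mul_inv_cancel, Units.val_one, one_smul]

theorem tensorCharSpan_le_invariants (χ : G →* kˣ) :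
    ρ.tensorCharSpan σ χ ≤ (ρ.tprod σ).invariants :=
  Submodule.span_le.mpr <| by
    rintro _ ⟨x, a, hx, ha, rfl⟩
    exact ρ.tmul_mem_invariants_tprod σ hx ha

variable [Fintype G] [Invertible (Fintype.card G : k)]

noncomputable def charProj (χ : G →* kˣ) : V →ₗ[k] V :=
  ⅟(Fintype.card G : k) • ∑ g, (χ⁻¹ g : k) • ρ g

theorem charProj_apply (χ : G →* kˣ) (v : V) :
    ρ.charProj χ v = ⅟(Fintype.card G : k) • ∑ g, (χ⁻¹ g : k) • ρ g v := by
  simp [charProj]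

theorem charProj_apply_of_mem {χ ψ : G →* kˣ} {v : V} (hv : v ∈ ρ.charSubspace ψ) :
    ρ.charProj χ v = (⅟(Fintype.card G : k) * ∑ g, ((χ⁻¹ * ψ) g : k)) • v := by
  simp only [charProj_apply, (ρ.mem_charSubspace).mp hv, smul_smul, ← Finset.sum_smul,
    MonoidHom.mul_apply, Units.val_mul]

theorem charProj_apply_self_of_mem {χ : G →* kˣ} {v : V} (hv : v ∈ ρ.charSubspace χ) :
    ρ.charProj χ v = v := by
  simp [ρ.charProj_apply_of_mem hv, Finset.card_univ]

theorem charProj_apply_of_mem_of_ne {χ ψ : G →* kˣ} {v : V} (hv : v ∈ ρ.charSubspace ψ)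
    (hψ : ψ ≠ χ) : ρ.charProj χ v = 0 := by
  rw [ρ.charProj_apply_of_mem hv, MonoidHom.sum_coe_apply_eq_zero, mul_zero, zero_smul]
  exact fun h ↦ hψ (inv_mul_eq_one.mp h).symm

theorem charProj_mem (χ : G →* kˣ) (v : V) : ρ.charProj χ v ∈ ρ.charSubspace χ := by
  rw [mem_charSubspace]
  intro h
  rw [charProj_apply, LinearMap.map_smul, smul_comm (χ h : k)]
  congr 1
  rw [map_sum, Finset.smul_sum]
  exact Fintype.sum_equiv (Equiv.mulLeft h) _ _ fun g ↦ by
    rw [Equiv.coe_mulLeft, LinearMap.map_smul, ← Module.End.mul_apply, ← map_mul, smul_smul,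
      MonoidHom.inv_apply, MonoidHom.inv_apply, map_mul χ, mul_inv, ← Units.val_mul,
      mul_inv_cancel_left]

theorem averageMap_eq_smul_sum : ρ.averageMap = ⅟(Fintype.card G : k) • ∑ g, ρ g := by
  simp only [averageMap, GroupAlgebra.average, map_smul, map_sum, asAlgebraHom_of]

theorem averageMap_tprod_tmul_of_mem {χ : G →* kˣ} {x : V} (hx : x ∈ ρ.charSubspace χ) (a : W) :
    (ρ.tprod σ).averageMap (x ⊗ₜ[k] a) = x ⊗ₜ[k] σ.charProj χ⁻¹ a := by
  simp only [averageMap_eq_smul_sum, LinearMap.smul_apply, LinearMap.sum_apply, tprod_apply,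
    map_tmul, hx _, charProj_apply, MonoidHom.inv_apply, inv_inv, tmul_smul, tmul_sum,
    ← smul_tmul']

theorem averageMap_tprod_comp_rTensor_charProj (χ : G →* kˣ) :
    (ρ.tprod σ).averageMap ∘ₗ LinearMap.rTensor W (ρ.charProj χ) =
      map (ρ.charProj χ) (σ.charProj χ⁻¹) :=
  TensorProduct.ext' fun x a ↦ by
    rw [LinearMap.comp_apply, LinearMap.rTensor_tmul, map_tmul,
      ρ.averageMap_tprod_tmul_of_mem σ (ρ.charProj_mem χ x)]

theorem range_map_charProj_le_tensorCharSpan (χ : G →* kˣ) :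
    LinearMap.range (map (ρ.charProj χ) (σ.charProj χ⁻¹)) ≤ ρ.tensorCharSpan σ χ := by
  rw [range_map_eq_span_tmul]
  refine Submodule.span_mono ?_
  rintro _ ⟨x, a, rfl⟩
  exact ⟨_, _, ρ.charProj_mem χ x, σ.charProj_mem χ⁻¹ a, rfl⟩

section Duality

variable [HasEnoughRootsOfUnity k (Monoid.exponent G)] [Fintype (G →* kˣ)]

theorem sum_charProj :
    ∑ χ : G →* kˣ, ρ.charProj χ = LinearMap.id := by
  ext v
  simp only [LinearMap.sum_apply, charProj_apply, LinearMap.id_apply, ← Finset.smul_sum]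
  rw [Finset.sum_comm]
  simp_rw [← Finset.sum_smul]
  rw [Finset.sum_eq_single 1]
  · simp [card_monoidHom_units_eq_card, -invOf_eq_inv]
  · intro g _ hg
    simp_rw [MonoidHom.inv_apply, ← map_inv]
    rw [sum_monoidHom_units_apply_eq_zero (inv_ne_one.mpr hg), zero_smul]
  · simp

theorem sum_map_charProj :
    ∑ χ : G →* kˣ, map (ρ.charProj χ) (σ.charProj χ⁻¹) = (ρ.tprod σ).averageMap := by
  calc ∑ χ : G →* kˣ, map (ρ.charProj χ) (σ.charProj χ⁻¹)
      = (ρ.tprod σ).averageMap * LinearMap.rTensorHom W (∑ χ, ρ.charProj χ) := by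
        simp_rw [map_sum, Finset.mul_sum, ← averageMap_tprod_comp_rTensor_charProj]
        rfl
    _ = (ρ.tprod σ).averageMap := by
        rw [sum_charProj, LinearMap.coe_rTensorHom, LinearMap.rTensor_id]
        exact mul_one _

theorem invariants_tprod_le_iSup_tensorCharSpan :
    (ρ.tprod σ).invariants ≤ ⨆ χ, ρ.tensorCharSpan σ χ := by
  intro z hz
  rw [← averageMap_id _ z hz, ← sum_map_charProj, LinearMap.sum_apply]
  exact Submodule.sum_mem _ fun χ _ ↦
    Submodule.mem_iSup_of_mem χ (ρ.range_map_charProj_le_tensorCharSpan σ χ ⟨z, rfl⟩)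

theorem iSup_tensorCharSpan_eq_invariants :
    ⨆ χ, ρ.tensorCharSpan σ χ = (ρ.tprod σ).invariants :=
  le_antisymm (iSup_le (ρ.tensorCharSpan_le_invariants σ))
    (ρ.invariants_tprod_le_iSup_tensorCharSpan σ)

end Duality

theorem iSupIndep_tensorCharSpan : iSupIndep (ρ.tensorCharSpan σ) := by
  refine iSupIndep_of_le_eqLocus_of_le_ker (fun χ ↦ LinearMap.rTensor W (ρ.charProj χ))
    (fun χ ↦ Submodule.span_le.mpr ?_) fun χ ψ hψ ↦ Submodule.span_le.mpr ?_
  · rintro _ ⟨x, a, hx, -, rfl⟩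
    simp [ρ.charProj_apply_self_of_mem hx]
  · rintro _ ⟨x, a, hx, -, rfl⟩
    simp [ρ.charProj_apply_of_mem_of_ne hx hψ.symm]

end Representation

theorem stmt5_general (k : Type*) [Field k] [IsAlgClosed k] [CharZero k]
    (Γ : Type*) [CommGroup Γ] [Fintype Γ]
    (g : Type*) [LieRing g] [LieAlgebra k g]
    (A : Type*) [CommRing A] [Algebra k A]
    (actg : Γ →* (g ≃ₗ[k] g))
    (actA : Γ →* (A ≃ₐ[k] A))
    (S : (Γ →* kˣ) → Submodule k (g ⊗[k] A))
    (hS : ∀ χ : Γ →* kˣ, S χ = Submodule.span k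
      {z : g ⊗[k] A | ∃ (x : g) (a : A),
        (∀ γ : Γ, actg γ x = (χ γ : k) • x) ∧
        (∀ γ : Γ, actA γ a = ((χ⁻¹ : Γ →* kˣ) γ : k) • a) ∧
        z = x ⊗ₜ[k] a}) :
    iSupIndep S ∧
    (↑(⨆ χ : Γ →* kˣ, S χ) =
      {z : g ⊗[k] A | ∀ γ : Γ,
        TensorProduct.map ((actg γ : g ≃ₗ[k] g) : g →ₗ[k] g) (actA γ).toLinearMap z = z}) := by
  have : NeZero (Monoid.exponent Γ : k) :=
    ⟨Nat.cast_ne_zero.mpr Monoid.exponent_ne_zero_of_finite⟩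
  let : Invertible (Fintype.card Γ : k) :=
    invertibleOfNonzero (Nat.cast_ne_zero.mpr Fintype.card_ne_zero)
  let := Fintype.ofFinite (Γ →* kˣ)
  let ρ : Representation k Γ g := LinearEquiv.automorphismGroup.toLinearMapMonoidHom.comp actg
  let σ : Representation k Γ A := (AlgEquiv.toLinearMapHom k A).comp actA
  obtain rfl : S = ρ.tensorCharSpan σ := funext hS
  exact ⟨ρ.iSupIndep_tensorCharSpan σ,
    congrArg SetLike.coe (ρ.iSup_tensorCharSpan_eq_invariants σ)⟩

/-- Let `Γ` be a finite abelian group acting on a Lie algebra `g` (by Lie algebra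
automorphisms) and on a commutative `k`-algebra `A` (by algebra automorphisms), `k` algebraically
closed of characteristic 0. With `Γ` acting diagonally on `g ⊗ A`, the set of fixed points
decomposes as the direct sum, over characters `χ : Γ →* kˣ`, of the subspaces
`g_χ ⊗ A_{χ⁻¹}`: these subspaces are independent and their sum is the fixed-point subspace. -/
theorem stmt5 (k : Type*) [Field k] [IsAlgClosed k] [CharZero k]
    (Γ : Type*) [CommGroup Γ] [Fintype Γ]
    (g : Type*) [LieRing g] [LieAlgebra k g]
    (A : Type*) [CommRing A] [Algebra k A]
    (actg : Γ →* (g ≃ₗ[k] g))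
    (hactg : ∀ (γ : Γ) (x y : g), actg γ ⁅x, y⁆ = ⁅actg γ x, actg γ y⁆)
    (actA : Γ →* (A ≃ₐ[k] A))
    (S : (Γ →* kˣ) → Submodule k (g ⊗[k] A))
    (hS : ∀ χ : Γ →* kˣ, S χ = Submodule.span k
      {z : g ⊗[k] A | ∃ (x : g) (a : A),
        (∀ γ : Γ, actg γ x = (χ γ : k) • x) ∧
        (∀ γ : Γ, actA γ a = ((χ⁻¹ : Γ →* kˣ) γ : k) • a) ∧
        z = x ⊗ₜ[k] a}) :
    iSupIndep S ∧
    (↑(⨆ χ : Γ →* kˣ, S χ) =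
      {z : g ⊗[k] A | ∀ γ : Γ,
        TensorProduct.map ((actg γ : g ≃ₗ[k] g) : g →ₗ[k] g) (actA γ).toLinearMap z = z}) :=
  stmt5_general k Γ g A actg actA S hS
end

section
/- Let g be a Lie algebra over k and V a module over the current algebra g ⊗ k[t]. Fix a positive integer r and define, on W = V^r (the direct sum of r copies of V), the action of x ⊗ tⁿ by the lower-triangular block matrix whose (i, j) entry is C(n, i−j) times the action of x ⊗ t^{n−i+j} on V (with the conventions that x ⊗ tᵐ acts as 0 for m < 0 and C(n, s) = 0 for s < 0). Then W is a module over g ⊗ k[t]. -/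
/-!
Put `W = V ⊗ k[s]/(sʳ)`, the `i`-th copy of `V` standing for `V ⊗ sⁱ`. Then `x ⊗ tⁿ` acts on `W`
as `x ⊗ (t + s)ⁿ = ∑_d C(n, d) (x ⊗ t^{n-d}) s^d`, i.e. `W` is pulled back along the substitution
`t ↦ t + s`. Concretely, the operators `∑_d C(n, d) ρ x (n - d) s^d` form power series over
`End V` satisfying the bracket relation (Vandermonde's identity), and power series act on `V^r`
multiplicatively through lower-triangular Toeplitz matrices.
-/

/-- The truncated-polynomial action on `W = V^r`: `x ⊗ tⁿ` acts via the lower-triangular block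
matrix whose `(i,j)` entry is `C(n, i−j)` times the action of `x ⊗ t^{n−i+j}` on `V` (entries
with `i < j` or `n − i + j < 0` are zero). Here `ρ x n` denotes the action of `x ⊗ tⁿ` on `V`. -/
def truncAction {k : Type*} [Field k] {g : Type*} [LieRing g] [LieAlgebra k g]
    {V : Type*} [AddCommGroup V] [Module k V]
    (ρ : g → ℕ → Module.End k V) (r : ℕ)
    (x : g) (n : ℕ) (w : Fin r → V) : Fin r → V :=
  fun i => ∑ j : Fin r,
    if (j : ℕ) ≤ (i : ℕ) ∧ (i : ℕ) ≤ n + (j : ℕ) then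
      (Nat.choose n ((i : ℕ) - (j : ℕ))) • (ρ x (n - ((i : ℕ) - (j : ℕ)))) (w j)
    else 0

open PowerSeries Finset

section Toeplitz

variable {R M : Type*} [Semiring R] [AddCommGroup M] [Module R M] {r : ℕ}

/-- The action of `A = ∑ Aₐ sᵃ` on `M ⊗ R[s]/(sʳ) = M^r`. -/
noncomputable def lowerToeplitz (A : PowerSeries (Module.End R M)) (w : Fin r → M) : Fin r → M :=
  fun i => ∑ j : Fin r, if j ≤ i then coeff ((i : ℕ) - j) A (w j) else 0

theorem Fin.sum_ite_Icc_eq_sum_antidiagonal {l i : Fin r} (hli : l ≤ i) (f : ℕ → ℕ → M) :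
    ∑ j : Fin r, (if l ≤ j ∧ j ≤ i then f ((i : ℕ) - j) ((j : ℕ) - l) else 0) =
      ∑ p ∈ antidiagonal ((i : ℕ) - l), f p.1 p.2 := by
  rw [← sum_filter, Nat.sum_antidiagonal_eq_sum_range_succ f]
  refine sum_nbij' (fun j => (i : ℕ) - j) (fun k => ⟨(i : ℕ) - k, by omega⟩) ?_ ?_ ?_ ?_ ?_
  · intro j hj
    simp only [mem_filter, mem_univ, true_and, mem_range, Fin.le_def] at hj ⊢
    omega
  · intro k hk
    simp only [mem_filter, mem_univ, true_and, mem_range, Fin.le_def] at hk hli ⊢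
    omega
  · intro j hj
    simp only [mem_filter, mem_univ, true_and, Fin.le_def] at hj
    exact Fin.ext (by simp only; omega)
  · intro k hk
    simp only [mem_range] at hk
    simp only
    omega
  · intro j hj
    simp only [mem_filter, mem_univ, true_and, Fin.le_def] at hj
    congr 1
    omega

theorem lowerToeplitz_sub (A B : PowerSeries (Module.End R M)) (w : Fin r → M) :
    lowerToeplitz (A - B) w = lowerToeplitz A w - lowerToeplitz B w := by
  funext i
  simp only [lowerToeplitz, Pi.sub_apply, map_sub, LinearMap.sub_apply, ← sum_sub_distrib]
  refine sum_congr rfl fun j _ => ?_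
  split_ifs <;> simp

theorem lowerToeplitz_mul (A B : PowerSeries (Module.End R M)) (w : Fin r → M) :
    lowerToeplitz (A * B) w = lowerToeplitz A (lowerToeplitz B w) := by
  funext i
  have expand : ∀ j : Fin r,
      (if j ≤ i then coeff ((i : ℕ) - j) A (lowerToeplitz B w j) else 0) =
        ∑ l : Fin r, if l ≤ j ∧ j ≤ i then
          coeff ((i : ℕ) - j) A (coeff ((j : ℕ) - l) B (w l)) else 0 := by
    intro j
    split_ifs with hji
    · simp only [lowerToeplitz, map_sum, hji, and_true]
      exact sum_congr rfl fun l _ => by split_ifs <;> simp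
    · simp [hji]
  rw [lowerToeplitz, lowerToeplitz]
  simp only [expand]
  rw [sum_comm]
  refine sum_congr rfl fun l _ => ?_
  by_cases hli : l ≤ i
  · rw [if_pos hli, Fin.sum_ite_Icc_eq_sum_antidiagonal hli fun a b => coeff a A (coeff b B (w l)),
      coeff_mul, LinearMap.sum_apply]
    simp only [Module.End.mul_apply]
  · rw [if_neg hli]
    exact (sum_eq_zero fun j _ => if_neg fun h => hli (h.1.trans h.2)).symm

end Toeplitz

section BinomialSeries

variable {R M g : Type*} [Semiring R] [AddCommGroup M] [Module R M]

/-- `∑_d C(n, d) (x ⊗ t^{n-d}) s^d`, the action of `x ⊗ (t + s)ⁿ` expanded in `s`. -/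
def binomialShiftSeries (ρ : g → ℕ → Module.End R M) (x : g) (n : ℕ) :
    PowerSeries (Module.End R M) :=
  PowerSeries.mk fun d => n.choose d • ρ x (n - d)

theorem binomialShiftSeries_bracket [Bracket g g] (ρ : g → ℕ → Module.End R M)
    (hρ : ∀ (x y : g) (m n : ℕ), ρ ⁅x, y⁆ (m + n) = ρ x m * ρ y n - ρ y n * ρ x m)
    (x y : g) (m n : ℕ) :
    binomialShiftSeries ρ ⁅x, y⁆ (m + n) =
      binomialShiftSeries ρ x m * binomialShiftSeries ρ y n -
        binomialShiftSeries ρ y n * binomialShiftSeries ρ x m := by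
  ext d : 1
  rw [map_sub, coeff_mul, coeff_mul, ← Nat.sum_antidiagonal_swap (f := fun p =>
    coeff p.1 (binomialShiftSeries ρ y n) * coeff p.2 (binomialShiftSeries ρ x m)),
    ← sum_sub_distrib]
  simp only [binomialShiftSeries, coeff_mk, Prod.fst_swap, Prod.snd_swap]
  have term : ∀ p ∈ antidiagonal d,
      (m.choose p.1 • ρ x (m - p.1)) * (n.choose p.2 • ρ y (n - p.2)) -
          (n.choose p.2 • ρ y (n - p.2)) * (m.choose p.1 • ρ x (m - p.1)) =
        (m.choose p.1 * n.choose p.2) • ρ ⁅x, y⁆ (m + n - d) := by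
    rintro ⟨a, b⟩ hab
    rw [HasAntidiagonal.mem_antidiagonal] at hab
    dsimp only
    by_cases hle : a ≤ m ∧ b ≤ n
    · rw [show m + n - d = (m - a) + (n - b) by omega, hρ, smul_mul_smul_comm, smul_mul_smul_comm,
        mul_comm (n.choose b), smul_sub]
    · rcases not_and_or.mp hle with ha | hb
      · simp [Nat.choose_eq_zero_of_lt (not_le.mp ha)]
      · simp [Nat.choose_eq_zero_of_lt (not_le.mp hb)]
  rw [sum_congr rfl term, ← sum_smul, ← Nat.add_choose_eq]

end BinomialSeries

theorem truncAction_eq_lowerToeplitz {k : Type*} [Field k] {g : Type*} [LieRing g]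
    [LieAlgebra k g] {V : Type*} [AddCommGroup V] [Module k V]
    (ρ : g → ℕ → Module.End k V) (r : ℕ) (x : g) (n : ℕ) (w : Fin r → V) :
    truncAction ρ r x n w = lowerToeplitz (binomialShiftSeries ρ x n) w := by
  funext i
  refine sum_congr rfl fun j _ => ?_
  by_cases hji : j ≤ i
  · by_cases hin : (i : ℕ) ≤ n + j
    · simp [binomialShiftSeries, hji, hin, Fin.le_def.mp hji]
    · rw [if_neg (by omega), if_pos hji, binomialShiftSeries, coeff_mk, LinearMap.smul_apply,
        Nat.choose_eq_zero_of_lt (by omega), zero_smul]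
  · rw [if_neg (by omega), if_neg hji]

theorem stmt11_general (k : Type*) [Field k]
    (g : Type*) [LieRing g] [LieAlgebra k g]
    (V : Type*) [AddCommGroup V] [Module k V]
    (ρ : g → ℕ → Module.End k V)
    (hρ : ∀ (x y : g) (m n : ℕ),
      ρ ⁅x, y⁆ (m + n) = ρ x m * ρ y n - ρ y n * ρ x m)
    (r : ℕ) :
    ∀ (x y : g) (m n : ℕ) (w : Fin r → V),
      truncAction ρ r ⁅x, y⁆ (m + n) w =
        truncAction ρ r x m (truncAction ρ r y n w) -
          truncAction ρ r y n (truncAction ρ r x m w) := by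
  intro x y m n w
  simp only [truncAction_eq_lowerToeplitz, binomialShiftSeries_bracket ρ hρ, lowerToeplitz_sub,
    lowerToeplitz_mul]

/-- Let `g` be a Lie algebra over `k` and `V` a module over the current algebra
`g ⊗ k[t]` (with action operators `ρ x n` for `x ⊗ tⁿ` satisfying the defining compatibility).
For a positive integer `r`, the truncated action on `W = V^r` defined above satisfies the module
law, so `W` is a `g ⊗ k[t]`-module. -/
theorem stmt11 (k : Type*) [Field k] [CharZero k]
    (g : Type*) [LieRing g] [LieAlgebra k g]
    (V : Type*) [AddCommGroup V] [Module k V]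
    (ρ : g → ℕ → Module.End k V)
    (hρ : ∀ (x y : g) (m n : ℕ),
      ρ ⁅x, y⁆ (m + n) = ρ x m * ρ y n - ρ y n * ρ x m)
    (r : ℕ) (hr : 0 < r) :
    ∀ (x y : g) (m n : ℕ) (w : Fin r → V),
      truncAction ρ r ⁅x, y⁆ (m + n) w =
        truncAction ρ r x m (truncAction ρ r y n w) -
          truncAction ρ r y n (truncAction ρ r x m w) :=
  stmt11_general k g V ρ hρ r
end
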